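/- arXiv:2012.03092 — 2 statements merged into one kernel-verified Lean document; each statement's English description precedes it below -/
import Mathlib

section
/- Let a ∈ ℝⁿ be nonzero and let a_r be a vector keeping the r largest-in-magnitude entries of a and setting the rest to zero (1 ≤ r ≤ n). Then the unit vector a⁰ = a_r/‖a_r‖ satisfies ⟨a, a⁰⟩ ≥ √(r/n)·‖a‖. -/
open Finset

noncomputable def enorm2 {ι : Type*} [Fintype ι] (x : ι → ℝ) : ℝ :=
  Real.sqrt (∑ i, x i ^ 2)

def dot {ι : Type*} [Fintype ι] (x y : ι → ℝ) : ℝ := ∑ i, x i * y i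

noncomputable def l0 {ι : Type*} [Fintype ι] (x : ι → ℝ) : ℕ :=
  (Finset.univ.filter fun i => x i ≠ 0).card

def IsTrunc {ι : Type*} [Fintype ι] [DecidableEq ι] (a : ι → ℝ) (r : ℕ) (ar : ι → ℝ) : Prop :=
  ∃ S : Finset ι, S.card = r ∧ (∀ i ∈ S, ar i = a i) ∧ (∀ i ∉ S, ar i = 0) ∧
    ∀ i ∈ S, ∀ j ∉ S, |a j| ≤ |a i|

noncomputable def lmax {m n' : Type*} [Fintype m] [Fintype n'] (A : Matrix m n' ℝ) : ℝ :=
  sSup {c | ∃ x : n' → ℝ, enorm2 x = 1 ∧ c = enorm2 (A.mulVec x)}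

noncomputable def fnorm {m n' : Type*} [Fintype m] [Fintype n'] (A : Matrix m n' ℝ) : ℝ :=
  Real.sqrt (∑ i, ∑ j, A i j ^ 2)

def tri {n1 n2 n3 : ℕ} (A : Fin n1 → Fin n2 → Fin n3 → ℝ)
    (x : Fin n1 → ℝ) (y : Fin n2 → ℝ) (z : Fin n3 → ℝ) : ℝ :=
  ∑ i, ∑ j, ∑ k, A i j k * x i * y j * z k

def mlin {d : ℕ} {n : Fin d → ℕ} (A : (∀ j, Fin (n j)) → ℝ)
    (x : ∀ j, Fin (n j) → ℝ) : ℝ :=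
  ∑ i, A i * ∏ j, x j (i j)

/-!
Let `S` be the set of the `r` retained indices, `s = ∑_{i ∈ S} aᵢ²` and `T = ‖a‖²`. Every square outside
`S` is at most every square inside it, hence at most the mean `s / r`; summing over the `n - r`
indices outside `S` gives `r T ≤ n s`. Since `a_r` agrees with `a` on its support,
`⟨a, a_r⟩ = ‖a_r‖² = s`, so `⟨a, a⁰⟩ = √s ≥ √(r T / n)`.
-/

section

variable {ι : Type*} [Fintype ι]

-- Also true for `x = 0`, where both sides are `0` because `0 / 0 = 0`.
lemma dot_div_enorm2_eq_enorm2 {a x : ι → ℝ} (h : ∀ i, a i * x i = x i ^ 2) :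
    dot a (fun i => x i / enorm2 x) = enorm2 x := by
  calc dot a (fun i => x i / enorm2 x) = (∑ i, x i ^ 2) / enorm2 x := by
        simp only [dot, mul_div_assoc', ← Finset.sum_div, h]
    _ = enorm2 x := Real.div_sqrt

lemma card_mul_sum_sq_le_of_abs_le (a : ι → ℝ) (S : Finset ι)
    (hS : ∀ i ∈ S, ∀ j ∉ S, |a j| ≤ |a i|) :
    (S.card : ℝ) * ∑ i, a i ^ 2 ≤ Fintype.card ι * ∑ i ∈ S, a i ^ 2 := by
  classical
  have hout : ∀ j ∈ Sᶜ, (S.card : ℝ) * a j ^ 2 ≤ ∑ i ∈ S, a i ^ 2 := fun j hj => by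
    rw [← nsmul_eq_mul, ← Finset.sum_const]
    exact Finset.sum_le_sum fun i hi => sq_le_sq.mpr (hS i hi j (Finset.mem_compl.mp hj))
  have hcard : (Fintype.card ι : ℝ) = S.card + Sᶜ.card := by
    rw [← Nat.cast_add, Finset.card_add_card_compl]
  calc (S.card : ℝ) * ∑ i, a i ^ 2
      = S.card * ∑ i ∈ S, a i ^ 2 + ∑ j ∈ Sᶜ, S.card * a j ^ 2 := by
        rw [← Finset.sum_add_sum_compl S, mul_add, ← Finset.mul_sum]
    _ ≤ S.card * ∑ i ∈ S, a i ^ 2 + Sᶜ.card * ∑ i ∈ S, a i ^ 2 := by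
        grw [Finset.sum_le_card_nsmul _ _ _ hout, nsmul_eq_mul]
    _ = Fintype.card ι * ∑ i ∈ S, a i ^ 2 := by rw [hcard, add_mul]

variable [DecidableEq ι] {a ar : ι → ℝ} {r : ℕ}

lemma IsTrunc.mul_eq_sq (htr : IsTrunc a r ar) (i : ι) : a i * ar i = ar i ^ 2 := by
  obtain ⟨S, -, hin, hout, -⟩ := htr
  by_cases hi : i ∈ S
  · rw [hin i hi, sq]
  · simp [hout i hi]

lemma IsTrunc.card_mul_sum_sq_le (htr : IsTrunc a r ar) :
    (r : ℝ) * ∑ i, a i ^ 2 ≤ Fintype.card ι * ∑ i, ar i ^ 2 := by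
  obtain ⟨S, rfl, hin, hout, hS⟩ := htr
  have hsum : ∑ i, ar i ^ 2 = ∑ i ∈ S, a i ^ 2 := by
    rw [← Finset.sum_subset S.subset_univ fun i _ hi => by simp [hout i hi]]
    exact Finset.sum_congr rfl fun i hi => by rw [hin i hi]
  rw [hsum]
  exact card_mul_sum_sq_le_of_abs_le a S hS

end

theorem stmt_0_general {n : ℕ} (a : Fin n → ℝ) (r : ℕ) (ar : Fin n → ℝ) (htr : IsTrunc a r ar) :
    dot a (fun i => ar i / enorm2 ar) ≥ Real.sqrt ((r : ℝ) / n) * enorm2 a := by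
  have hsq : (r : ℝ) / n * ∑ i, a i ^ 2 ≤ ∑ i, ar i ^ 2 := by
    rw [div_mul_eq_mul_div]
    refine div_le_of_le_mul₀ n.cast_nonneg (by positivity) ?_
    simpa [mul_comm] using htr.card_mul_sum_sq_le
  rw [dot_div_enorm2_eq_enorm2 htr.mul_eq_sq, ge_iff_le, enorm2, enorm2,
    ← Real.sqrt_mul (by positivity)]
  exact Real.sqrt_le_sqrt hsq

/-- Proposition 3.1: the normalized truncation a⁰ = a_r/‖a_r‖ satisfies
⟨a, a⁰⟩ ≥ √(r/n)·‖a‖. -/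
theorem stmt_0 {n : ℕ} (a : Fin n → ℝ) (r : ℕ) (hr1 : 1 ≤ r) (hrn : r ≤ n)
    (ha : a ≠ 0) (ar : Fin n → ℝ) (htr : IsTrunc a r ar) :
    dot a (fun i => ar i / enorm2 ar) ≥ Real.sqrt ((r : ℝ) / n) * enorm2 a :=
  stmt_0_general a r ar htr
end

section
/- For a nonzero d-th order tensor 𝒜 ∈ ℝ^{n₁×⋯×n_d}, the output (x₁⁰,…,x_d⁰) of Algorithm A (fiber selection followed by sequential truncated updates) satisfies 𝒜(x₁⁰,…,x_d⁰) ≥ v_opt / √(∏_{j=1}^{d−1} r_j), where v_opt is the maximum of the multilinear form 𝒜(x₁,…,x_d) over unit vectors x_j with ‖x_j‖₀ ≤ r_j. -/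
open Finset

/-- Partial contraction of 𝒜 used in Algorithm A: coordinates k < j are fixed
at basis vectors e^{ī_k}, coordinate j is free, coordinates k > j are
contracted with x_k. -/
def gvec {d : ℕ} {n : Fin d → ℕ} (A : (∀ k, Fin (n k)) → ℝ)
    (ib : ∀ k, Fin (n k)) (x : ∀ k, Fin (n k) → ℝ) (j : Fin d) : Fin (n j) → ℝ :=
  fun t => ∑ i : ∀ k, Fin (n k), A i * ∏ k,
    (if k < j then (if i k = ib k then (1 : ℝ) else 0)
     else if j < k then x k (i k)
     else (if (⟨k, i k⟩ : Σ m : Fin d, Fin (n m)) = ⟨j, t⟩ then 1 else 0))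

/-!
Write `φ m = 𝒜(e^{ī₁},…,e^{īₘ},x_{m+1},…,x_d)`, i.e. `mlin A (basisPrefix ib x m)`. Since `x_j`
is the normalized truncation `t_j / ‖t_j‖` of the partial contraction `g_j`,
`φ (j-1) = ⟨g_j, x_j⟩ = ‖t_j‖ ≥ |g_j(ī_j)| = φ j`, so `𝒜(x) = φ 0 ≥ φ (d-1) = ‖T_ī‖`, the
largest truncated fiber norm. Conversely, split `𝒜(y)` along the last mode: each fiber is
paired with the `r_d`-sparse unit vector `y_d`, which sees at most `r_d` of its entries, so the
pairing is at most the norm of the fiber's truncation, hence at most `‖T_ī‖`; the weights of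
the fibers sum to at most `∏_{j<d} ‖y_j‖₁ ≤ ∏_{j<d} √r_j`.
-/

lemma sum_le_sum_of_forall_le_of_card_le {M : Type*} [AddCommMonoid M] [LinearOrder M]
    [IsOrderedAddMonoid M] {κ : Type*} {f : κ → M} {s t : Finset κ} (hst : #s ≤ #t)
    (hf : ∀ i ∈ s, ∀ j ∈ t, f i ≤ f j) (ht : ∀ j ∈ t, 0 ≤ f j) :
    ∑ i ∈ s, f i ≤ ∑ j ∈ t, f j := by
  rcases t.eq_empty_or_nonempty with rfl | htne
  · simp [card_eq_zero.mp (Nat.le_zero.mp hst)]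
  obtain ⟨j₀, hj₀, hmin⟩ := t.exists_min_image f htne
  calc ∑ i ∈ s, f i ≤ #s • f j₀ := sum_le_card_nsmul _ _ _ fun i hi => hf i hi j₀ hj₀
    _ ≤ #t • f j₀ := nsmul_le_nsmul_left (ht j₀ hj₀) hst
    _ ≤ ∑ j ∈ t, f j := card_nsmul_le_sum _ _ _ hmin

section Truncation

variable {ι : Type*} [Fintype ι]

lemma enorm2_nonneg (x : ι → ℝ) : 0 ≤ enorm2 x := Real.sqrt_nonneg _

lemma enorm2_sq (x : ι → ℝ) : enorm2 x ^ 2 = ∑ i, x i ^ 2 :=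
  Real.sq_sqrt (sum_nonneg fun _ _ => sq_nonneg _)

variable [DecidableEq ι] {a ar : ι → ℝ} {r : ℕ}

lemma IsTrunc.sum_sq_le (h : IsTrunc a r ar) {U : Finset ι} (hU : #U ≤ r) :
    ∑ i ∈ U, a i ^ 2 ≤ enorm2 ar ^ 2 := by
  obtain ⟨S, rfl, hagree, hzero, htop⟩ := h
  have hnorm : enorm2 ar ^ 2 = ∑ i ∈ S, a i ^ 2 := by
    rw [enorm2_sq, ← sum_subset (subset_univ S) fun i _ hi => by simp [hzero i hi]]
    exact sum_congr rfl fun i hi => by rw [hagree i hi]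
  have hcard : #(U \ S) ≤ #(S \ U) := by
    have := card_sdiff_add_card_inter U S
    have := card_sdiff_add_card_inter S U
    rw [inter_comm] at this
    omega
  have houter : ∑ i ∈ U \ S, a i ^ 2 ≤ ∑ i ∈ S \ U, a i ^ 2 :=
    sum_le_sum_of_forall_le_of_card_le hcard
      (fun i hi j hj => sq_le_sq.mpr (htop j (mem_sdiff.mp hj).1 i (mem_sdiff.mp hi).2))
      (fun j _ => sq_nonneg _)
  rw [hnorm, ← sum_inter_add_sum_sdiff U S, ← sum_inter_add_sum_sdiff S U, inter_comm]
  exact add_le_add_right houter _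

lemma IsTrunc.abs_dot_le (h : IsTrunc a r ar) {y : ι → ℝ} (hy : enorm2 y ≤ 1)
    (hy0 : l0 y ≤ r) : |dot a y| ≤ enorm2 ar := by
  set U := univ.filter fun i => y i ≠ 0
  have hdot : dot a y = ∑ i ∈ U, a i * y i :=
    (sum_filter_of_ne fun i _ hi => right_ne_zero_of_mul hi).symm
  have hyU : ∑ i ∈ U, y i ^ 2 ≤ 1 := calc
    ∑ i ∈ U, y i ^ 2 ≤ ∑ i, y i ^ 2 := sum_le_univ_sum_of_nonneg fun i => sq_nonneg _
    _ = enorm2 y ^ 2 := (enorm2_sq y).symm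
    _ ≤ 1 := pow_le_one₀ (enorm2_nonneg y) hy
  refine abs_le_of_sq_le_sq ?_ (enorm2_nonneg ar)
  calc dot a y ^ 2 ≤ (∑ i ∈ U, a i ^ 2) * ∑ i ∈ U, y i ^ 2 :=
        hdot ▸ sum_mul_sq_le_sq_mul_sq U a y
    _ ≤ enorm2 ar ^ 2 * 1 :=
        mul_le_mul (h.sum_sq_le hy0) hyU (sum_nonneg fun i _ => sq_nonneg _) (sq_nonneg _)
    _ = enorm2 ar ^ 2 := mul_one _

lemma IsTrunc.abs_apply_le (h : IsTrunc a r ar) (hr : 1 ≤ r) (s : ι) : |a s| ≤ enorm2 ar := by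
  have := h.sum_sq_le (U := {s}) (by simpa using hr)
  rw [sum_singleton] at this
  exact abs_le_of_sq_le_sq this (enorm2_nonneg ar)

lemma IsTrunc.dot_div_enorm2 (h : IsTrunc a r ar) :
    dot a (fun s => ar s / enorm2 ar) = enorm2 ar := by
  obtain ⟨S, -, hagree, hzero, -⟩ := h
  have hdot : dot a ar = enorm2 ar ^ 2 := by
    rw [dot, enorm2_sq]
    refine sum_congr rfl fun i _ => ?_
    by_cases hi : i ∈ S
    · rw [hagree i hi, sq]
    · rw [hzero i hi]; ring
  have hdiv : dot a (fun s => ar s / enorm2 ar) = dot a ar / enorm2 ar := by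
    simp only [dot, mul_div_assoc', sum_div]
  rcases eq_or_ne (enorm2 ar) 0 with h0 | h0
  · rw [hdiv, h0, div_zero]
  · rw [hdiv, hdot, sq, mul_div_cancel_right₀ _ h0]

end Truncation

lemma sum_abs_le_sqrt_l0_mul_enorm2 {ι : Type*} [Fintype ι] (y : ι → ℝ) :
    ∑ i, |y i| ≤ √(l0 y) * enorm2 y := by
  set U := univ.filter fun i => y i ≠ 0
  have hsum : ∑ i ∈ U, |y i| = ∑ i, |y i| :=
    sum_filter_of_ne fun i _ hi => abs_ne_zero.mp hi
  rw [← hsum, l0, enorm2, ← Real.sqrt_mul (Nat.cast_nonneg _)]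
  refine Real.le_sqrt_of_sq_le ?_
  calc (∑ i ∈ U, |y i|) ^ 2 ≤ (#U : ℝ) * ∑ i ∈ U, |y i| ^ 2 := sq_sum_le_card_mul_sum_sq
    _ ≤ #U * ∑ i, y i ^ 2 := by
        simp only [sq_abs]
        exact mul_le_mul_of_nonneg_left
          (sum_le_univ_sum_of_nonneg fun i => sq_nonneg (y i)) (Nat.cast_nonneg _)

section Contraction

open Function

variable {d : ℕ} {n : Fin d → ℕ}

def basisPrefix (ib : ∀ k, Fin (n k)) (x : ∀ k, Fin (n k) → ℝ) (m : ℕ) :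
    ∀ k, Fin (n k) → ℝ :=
  fun k => if (k : ℕ) < m then Pi.single (ib k) 1 else x k

@[simp]
lemma basisPrefix_zero (ib : ∀ k, Fin (n k)) (x : ∀ k, Fin (n k) → ℝ) :
    basisPrefix ib x 0 = x := by
  ext k
  simp [basisPrefix]

lemma mlin_update_eq_sum (A : (∀ k, Fin (n k)) → ℝ) (z : ∀ k, Fin (n k) → ℝ) (j : Fin d)
    (v : Fin (n j) → ℝ) :
    mlin A (update z j v) = ∑ s, v s * mlin A (update z j (Pi.single s 1)) := by
  have hprod : ∀ (w : Fin (n j) → ℝ) (i : ∀ k, Fin (n k)),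
      ∏ k, update z j w k (i k) = w (i j) * ∏ k ∈ univ \ {j}, z k (i k) := fun w i => by
    rw [← prod_update_of_mem (mem_univ j)]
    exact prod_congr rfl fun k _ =>
      apply_update (fun k (zk : Fin (n k) → ℝ) => zk (i k)) z j w k
  simp only [mlin, hprod, mul_sum]
  rw [sum_comm]
  refine sum_congr rfl fun i _ => ?_
  simp [Pi.single_apply, mul_left_comm]

lemma mlin_single (A : (∀ k, Fin (n k)) → ℝ) (i : ∀ k, Fin (n k)) :
    mlin A (fun k => Pi.single (i k) 1) = A i := by
  simp [mlin, Pi.single_apply, prod_boole, ← funext_iff]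

lemma gvec_eq_mlin (A : (∀ k, Fin (n k)) → ℝ) (ib : ∀ k, Fin (n k))
    (x : ∀ k, Fin (n k) → ℝ) (j : Fin d) (s : Fin (n j)) :
    gvec A ib x j s = mlin A (update (basisPrefix ib x j) j (Pi.single s 1)) := by
  refine sum_congr rfl fun i _ => congrArg (A i * ·) (prod_congr rfl fun k _ => ?_)
  rcases lt_trichotomy k j with h | rfl | h
  · simp [h, h.ne, basisPrefix, Pi.single_apply]
  · simp [Pi.single_apply]
  · simp [h, h.ne', not_lt_of_gt h, basisPrefix]

lemma dot_gvec_self (A : (∀ k, Fin (n k)) → ℝ) (ib : ∀ k, Fin (n k))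
    (x : ∀ k, Fin (n k) → ℝ) (j : Fin d) :
    dot (gvec A ib x j) (x j) = mlin A (basisPrefix ib x j) := by
  have hj : basisPrefix ib x j j = x j := by simp [basisPrefix]
  conv_rhs => rw [← update_eq_self j (basisPrefix ib x j), mlin_update_eq_sum, hj]
  simp only [dot, gvec_eq_mlin, mul_comm]

lemma gvec_apply_self (A : (∀ k, Fin (n k)) → ℝ) (ib : ∀ k, Fin (n k))
    (x : ∀ k, Fin (n k) → ℝ) (j : Fin d) :
    gvec A ib x j (ib j) = mlin A (basisPrefix ib x (j + 1)) := by
  rw [gvec_eq_mlin]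
  congr 1
  funext k
  rcases eq_or_ne k j with rfl | hk
  · simp [basisPrefix]
  · have : (k : ℕ) < j ↔ (k : ℕ) < j + 1 := by omega
    simp [basisPrefix, hk, this]

lemma gvec_of_val_eq (A : (∀ k, Fin (n k)) → ℝ) (i : ∀ k, Fin (n k))
    (x : ∀ k, Fin (n k) → ℝ) {j : Fin d} (hj : (j : ℕ) = d - 1) (s : Fin (n j)) :
    gvec A i x j s = A (update i j s) := by
  rw [gvec_eq_mlin, ← mlin_single A (update i j s)]
  congr 1
  funext k
  rcases eq_or_ne k j with rfl | hk
  · simp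
  · have : (k : ℕ) < j := by omega
    simp [basisPrefix, hk, this]

lemma fiber_eq_gvec (A : (∀ k, Fin (n k)) → ℝ) (x : ∀ k, Fin (n k) → ℝ) {j : Fin d}
    (hj : (j : ℕ) = d - 1) (s₀ : Fin (n j)) (p : ∀ k : {k // k ≠ j}, Fin (n k)) :
    (fun s => A ((Equiv.piSplitAt j _).symm (s, p))) =
      gvec A ((Equiv.piSplitAt j _).symm (s₀, p)) x j := by
  funext s
  rw [gvec_of_val_eq A _ x hj]
  congr 1
  funext k
  rcases eq_or_ne k j with rfl | hk
  · simp [Equiv.piSplitAt_symm_apply]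
  · simp [Equiv.piSplitAt_symm_apply, hk]

end Contraction

lemma enorm2_le_mlin_of_isTrunc {d : ℕ} {n : Fin d → ℕ} {A : (∀ k, Fin (n k)) → ℝ}
    {ib : ∀ k, Fin (n k)} {x t : ∀ k, Fin (n k) → ℝ} {r : Fin d → ℕ}
    (hr : ∀ j, 1 ≤ r j)
    (ht : ∀ j, IsTrunc (gvec A ib x j) (r j) (t j))
    (hx : ∀ j, x j = fun s => t j s / enorm2 (t j)) (j : Fin d) :
    enorm2 (t j) ≤ mlin A x := by
  have hstep : ∀ j : Fin d, mlin A (basisPrefix ib x j) = enorm2 (t j) := fun j => by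
    rw [← dot_gvec_self, hx j]
    exact (ht j).dot_div_enorm2
  have hdecr : ∀ m ≤ d, mlin A (basisPrefix ib x m) ≤ mlin A x := by
    intro m hm
    induction m with
    | zero => simp
    | succ m ih =>
      let k : Fin d := ⟨m, hm⟩
      calc mlin A (basisPrefix ib x (m + 1))
          = gvec A ib x k (ib k) := (gvec_apply_self A ib x k).symm
        _ ≤ enorm2 (t k) := (le_abs_self _).trans ((ht k).abs_apply_le (hr k) _)
        _ = mlin A (basisPrefix ib x m) := (hstep k).symm
        _ ≤ mlin A x := ih (by omega)
  rw [← hstep j]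
  exact hdecr j j.is_lt.le

lemma mlin_eq_sum_dot_fiber {d : ℕ} {n : Fin d → ℕ} (A : (∀ k, Fin (n k)) → ℝ)
    (y : ∀ k, Fin (n k) → ℝ) (j : Fin d) :
    mlin A y = ∑ p : (∀ k : {k // k ≠ j}, Fin (n k)),
      (∏ k, y k.1 (p k)) * dot (fun s => A ((Equiv.piSplitAt j _).symm (s, p))) (y j) := by
  rw [mlin, ← (Equiv.piSplitAt j _).symm.sum_comp, Fintype.sum_prod_type, sum_comm]
  refine sum_congr rfl fun p _ => ?_
  rw [dot, mul_sum]
  refine sum_congr rfl fun s _ => ?_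
  rw [Fintype.prod_eq_mul_prod_subtype_ne _ j]
  have hrest (k : {k // k ≠ j}) :
      (Equiv.piSplitAt j (fun k => Fin (n k))).symm (s, p) k = p k := by
    simp [Equiv.piSplitAt_symm_apply, k.2]
  simp only [Equiv.piSplitAt_symm_apply, dif_pos, hrest]
  ring

lemma abs_sum_prod_mul_le {κ : Type*} [Fintype κ] [DecidableEq κ] {β : κ → Type*}
    [∀ k, Fintype (β k)] (u : ∀ k, β k → ℝ) (g : (∀ k, β k) → ℝ) {M : ℝ}
    (hg : ∀ p, |g p| ≤ M) :
    |∑ p, (∏ k, u k (p k)) * g p| ≤ (∏ k, ∑ s, |u k s|) * M := by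
  rw [Fintype.prod_sum, sum_mul]
  refine (abs_sum_le_sum_abs _ _).trans (sum_le_sum fun p _ => ?_)
  rw [abs_mul, abs_prod]
  exact mul_le_mul_of_nonneg_left (hg p) (prod_nonneg fun k _ => abs_nonneg _)

lemma mlin_le_sqrt_prod_mul {d : ℕ} {n : Fin d → ℕ} {A : (∀ k, Fin (n k)) → ℝ}
    {y : ∀ k, Fin (n k) → ℝ} {r : Fin d → ℕ}
    (hy : ∀ k, enorm2 (y k) ≤ 1 ∧ l0 (y k) ≤ r k)
    (j : Fin d) {M : ℝ} (hM₀ : 0 ≤ M)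
    (hM : ∀ p, |dot (fun s => A ((Equiv.piSplitAt j _).symm (s, p))) (y j)| ≤ M) :
    mlin A y ≤ √(∏ k ∈ univ.erase j, (r k : ℝ)) * M := by
  have hl1 (k : Fin d) : ∑ s, |y k s| ≤ √(r k) := calc
    ∑ s, |y k s| ≤ √(l0 (y k)) * enorm2 (y k) := sum_abs_le_sqrt_l0_mul_enorm2 _
    _ ≤ √(r k) * 1 := mul_le_mul (Real.sqrt_le_sqrt (by exact_mod_cast (hy k).2)) (hy k).1
        (enorm2_nonneg _) (Real.sqrt_nonneg _)
    _ = √(r k) := mul_one _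
  calc mlin A y ≤ (∏ k : {k // k ≠ j}, ∑ s, |y k s|) * M :=
        (le_abs_self _).trans (mlin_eq_sum_dot_fiber A y j ▸ abs_sum_prod_mul_le _ _ hM)
    _ ≤ (∏ k : {k // k ≠ j}, √(r k)) * M := by
        gcongr with k
        exact hl1 k
    _ = √(∏ k ∈ univ.erase j, (r k : ℝ)) * M := by
        rw [Real.sqrt_prod _ fun _ _ => Nat.cast_nonneg _,
          prod_subtype (univ.erase j) (p := (· ≠ j)) (by simp)]

theorem stmt_9_general {d : ℕ} {n : Fin d → ℕ}
    (A : (∀ k, Fin (n k)) → ℝ)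
    (r : Fin d → ℕ) (hr : ∀ j, 1 ≤ r j ∧ r j ≤ n j)
    (last : Fin d) (hlast : (last : ℕ) = d - 1)
    (x : ∀ j, Fin (n j) → ℝ) (t : ∀ j, Fin (n j) → ℝ)
    -- step 1-2: truncations of all mode-d fibers; select the fiber of
    -- largest truncated norm
    (T : (∀ k, Fin (n k)) → Fin (n last) → ℝ)
    (hT : ∀ i, IsTrunc (gvec A i x last) (r last) (T i))
    (ib : ∀ k, Fin (n k)) (hsel : ∀ i, enorm2 (T i) ≤ enorm2 (T ib))
    (htlast : t last = T ib)
    (hxlast : x last = fun s => t last s / enorm2 (t last))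
    -- step 3: sequential truncated updates for j = d-1 down to 1
    (hstep : ∀ j, j ≠ last → IsTrunc (gvec A ib x j) (r j) (t j) ∧
      x j = fun s => t j s / enorm2 (t j)) :
    ∀ y : ∀ j, Fin (n j) → ℝ, (∀ j, enorm2 (y j) = 1 ∧ l0 (y j) ≤ r j) →
      mlin A y ≤ Real.sqrt (∏ j ∈ Finset.univ.erase last, (r j : ℝ)) * mlin A x := by
  intro y hy
  have halg (j : Fin d) :
      IsTrunc (gvec A ib x j) (r j) (t j) ∧ x j = fun s => t j s / enorm2 (t j) := by
    rcases eq_or_ne j last with rfl | hj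
    · exact ⟨htlast ▸ hT ib, hxlast⟩
    · exact hstep j hj
  have hlower : enorm2 (T ib) ≤ mlin A x :=
    htlast ▸ enorm2_le_mlin_of_isTrunc (fun j => (hr j).1) (fun j => (halg j).1)
      (fun j => (halg j).2) last
  have hfiber (p) : |dot (fun s => A ((Equiv.piSplitAt last _).symm (s, p))) (y last)| ≤
      enorm2 (T ib) := by
    rw [fiber_eq_gvec A x hlast ⟨0, (hr last).1.trans (hr last).2⟩ p]
    exact ((hT _).abs_dot_le (hy last).1.le (hy last).2).trans (hsel _)
  calc mlin A y ≤ √(∏ j ∈ univ.erase last, (r j : ℝ)) * enorm2 (T ib) :=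
        mlin_le_sqrt_prod_mul (fun k => ⟨(hy k).1.le, (hy k).2⟩) last (enorm2_nonneg _) hfiber
    _ ≤ √(∏ j ∈ univ.erase last, (r j : ℝ)) * mlin A x :=
        mul_le_mul_of_nonneg_left hlower (Real.sqrt_nonneg _)

/-- Theorem 3.1' (general order): the output of Algorithm A satisfies
𝒜(x₁⁰,…,x_d⁰) ≥ v_opt/√(∏_{j=1}^{d-1} r_j). -/
theorem stmt_9 {d : ℕ} {n : Fin d → ℕ} (hd : 3 ≤ d)
    (A : (∀ k, Fin (n k)) → ℝ) (hA : A ≠ 0)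
    (r : Fin d → ℕ) (hr : ∀ j, 1 ≤ r j ∧ r j ≤ n j)
    (last : Fin d) (hlast : (last : ℕ) = d - 1)
    (x : ∀ j, Fin (n j) → ℝ) (t : ∀ j, Fin (n j) → ℝ)
    -- step 1-2: truncations of all mode-d fibers; select the fiber of
    -- largest truncated norm
    (T : (∀ k, Fin (n k)) → Fin (n last) → ℝ)
    (hT : ∀ i, IsTrunc (gvec A i x last) (r last) (T i))
    (ib : ∀ k, Fin (n k)) (hsel : ∀ i, enorm2 (T i) ≤ enorm2 (T ib))
    (htlast : t last = T ib)
    (hxlast : x last = fun s => t last s / enorm2 (t last))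
    -- step 3: sequential truncated updates for j = d-1 down to 1
    (hstep : ∀ j, j ≠ last → IsTrunc (gvec A ib x j) (r j) (t j) ∧
      x j = fun s => t j s / enorm2 (t j)) :
    ∀ y : ∀ j, Fin (n j) → ℝ, (∀ j, enorm2 (y j) = 1 ∧ l0 (y j) ≤ r j) →
      mlin A y ≤ Real.sqrt (∏ j ∈ Finset.univ.erase last, (r j : ℝ)) * mlin A x :=
  stmt_9_general A r hr last hlast x t T hT ib hsel htlast hxlast hstep
end
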